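/- Let θ : D ⥤ C be a partial n-ary operation with domain a full subcategory i : D ↪ C^n, and let θⱼ : Dⱼ ⥤ C be partial kⱼ-ary operations such that (θ₁,…,θₙ) : D₁ × ⋯ × Dₙ ⥤ C^n factors through D via a functor (θ₁,…,θₙ)'. Then the Day extensions satisfy (θ ∘ (θ₁,…,θₙ))_D ≅ θ_D ∘ (θ₁_D, …, θₙ_D) as functors [C ⥤ Type]^{k₁+⋯+kₙ} ⥤ [C ⥤ Type], naturally in all arguments. -/

import Mathlib

/-!
Once the inner coend of a partial Day extension is evaluated by co-Yoneda, both sides are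
left Kan extensions of external products. Extending along `t ⋙ θ` is extending along `t` and
then along `θ`; since `i` is fully faithful, extending along `t` is the same as extending
along `t ⋙ i = (θ₁, …, θₙ)` and restricting along `i`. Finally, the extension of an external product
along a tuple `(θ₁, …, θₙ)` is the external product of the extensions: a product of finitely
many coends in `Type` is the coend over the product category.
-/

open CategoryTheory Opposite

universe u v

namespace DayPaper

variable {B C : Type} [SmallCategory B] [SmallCategory C]

/-- A point of the coend defining the Day extension (left Kan extension) of a
copresheaf `P` along `θ`, at `c`. -/
structure DayPt (θ : B ⥤ C) (P : B ⥤ Type) (c : C) : Type where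
  pt : B
  elt : P.obj pt
  arr : θ.obj pt ⟶ c

/-- The relation generating the coend quotient. -/
def DayRel (θ : B ⥤ C) (P : B ⥤ Type) (c : C) : DayPt θ P c → DayPt θ P c → Prop :=
  fun x y => ∃ f : x.pt ⟶ y.pt, P.map f x.elt = y.elt ∧ x.arr = θ.map f ≫ y.arr

/-- The coend `∫^{b} P(b) × Hom(θ b, c)`. -/
def DayObj (θ : B ⥤ C) (P : B ⥤ Type) (c : C) : Type := Quot (DayRel θ P c)

/-- The Day extension of a copresheaf `P` along `θ`, as a copresheaf on `C`. -/
def DayCopresheaf (θ : B ⥤ C) (P : B ⥤ Type) : C ⥤ Type where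
  obj c := DayObj θ P c
  map {c c'} g := TypeCat.ofHom (Quot.map (fun x => (⟨x.pt, x.elt, x.arr ≫ g⟩ : DayPt θ P c'))
    (by rintro x y ⟨f, h1, h2⟩; exact ⟨f, h1, by dsimp; rw [h2, Category.assoc]⟩))
  map_id c := by
    ext q
    induction q using Quot.ind with
    | _ x => exact congrArg (Quot.mk _) (by rcases x with ⟨b, p, a⟩; simp)
  map_comp {c c' c''} g g' := by
    ext q
    induction q using Quot.ind with
    | _ x => exact congrArg (Quot.mk _) (by rcases x with ⟨b, p, a⟩; simp)

/-- The Day extension, as a functor on copresheaf categories. -/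
def DayExtGen (θ : B ⥤ C) : (B ⥤ Type) ⥤ (C ⥤ Type) where
  obj P := DayCopresheaf θ P
  map {P Q} η :=
    { app := fun c => TypeCat.ofHom (Quot.map
        (fun x => (⟨x.pt, η.app x.pt x.elt, x.arr⟩ : DayPt θ Q c))
        (by
          rintro x y ⟨f, h1, h2⟩
          exact ⟨f, by dsimp; rw [← h1, NatTrans.naturality_apply], h2⟩))
      naturality := by
        intro c c' g
        ext q
        induction q using Quot.ind with
        | _ x => rfl }
  map_id P := by
    ext c q
    induction q using Quot.ind with
    | _ x => rfl
  map_comp {P Q R} η η' := by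
    ext c q
    induction q using Quot.ind with
    | _ x => rfl

variable {ι : Type}

/-- The external product of a family of copresheaves. -/
def extProd (F : ι → (C ⥤ Type)) : (ι → C) ⥤ Type where
  obj x := ∀ i, (F i).obj (x i)
  map f := TypeCat.ofHom fun p => fun i => (F i).map (f i) (p i)
  map_id x := by ext p; simp
  map_comp f g := by ext p; simp

/-- The external product, as a functor. -/
def extProdFunctor (ι : Type) (C : Type) [SmallCategory C] :
    (ι → (C ⥤ Type)) ⥤ ((ι → C) ⥤ Type) where
  obj := extProd
  map {F G} α :=
    { app := fun x => TypeCat.ofHom fun p => fun i => (α i).app (x i) (p i)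
      naturality := by
        intro x y f
        ext p
        funext i
        exact NatTrans.naturality_apply (α i) (f i) (p i) }
  map_id F := by ext x p; rfl
  map_comp α β := by ext x p; rfl

/-- Reindexing of pi-categories along a map of index types. -/
def reindexPi {A : Type u} [Category.{v} A] {ι' ι : Type} (h : ι' → ι) :
    (ι → A) ⥤ (ι' → A) where
  obj x := fun i' => x (h i')
  map f := fun i' => f (h i')
  map_id _x := rfl
  map_comp _f _g := rfl

/-- The tuple `(θ₁, …, θₙ)` of a family of multi-ary operations. -/
def tupleFunctor {κ : ι → Type} (θs : ∀ i, (κ i → C) ⥤ C) :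
    ((Σ i, κ i) → C) ⥤ (ι → C) where
  obj x := fun i => (θs i).obj (fun s => x ⟨i, s⟩)
  map f := fun i => (θs i).map (fun s => f ⟨i, s⟩)
  map_id x := by funext i; exact (θs i).map_id _
  map_comp f g := by funext i; exact (θs i).map_comp _ _

/-- Multi-composition of multi-ary operations on `C`. -/
def mc {κ : ι → Type} (θ : (ι → C) ⥤ C) (θs : ∀ i, (κ i → C) ⥤ C) :
    ((Σ i, κ i) → C) ⥤ C :=
  tupleFunctor θs ⋙ θ

/-- The Day extension of a (total) `ι`-ary operation. -/
def DayExtFunctor (θ : (ι → C) ⥤ C) : (ι → (C ⥤ Type)) ⥤ (C ⥤ Type) :=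
  extProdFunctor ι C ⋙ DayExtGen θ

end DayPaper

open DayPaper CategoryTheory

namespace DayPaper

variable {C : Type} [SmallCategory C] {ι : Type}

/-- The Day extension of a partial `ι`-ary operation `θ : D ⥤ C` whose domain is
a full subcategory `i : D ↪ C^ι`: it sends a family of copresheaves `F` to the
double coend `a ↦ ∫^{d ∈ D} ∫^{c ∈ C^ι} Hom_C(θ d, a) × Hom(c, i d) × ∏ᵢ Fᵢ(cᵢ)`. -/
def pday {Dm : Type} [SmallCategory Dm] (θ : Dm ⥤ C) (i : Dm ⥤ (ι → C)) :
    (ι → (C ⥤ Type)) ⥤ (C ⥤ Type) :=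
  extProdFunctor ι C ⋙ DayExtGen (𝟭 (ι → C)) ⋙
    (Functor.whiskeringLeft Dm (ι → C) Type).obj i ⋙ DayExtGen θ

/-- The tuple `(θ₁, …, θₙ)` of a family of partial operations, as a functor
from the product of the domains to `C^ι`. -/
def tupleP {Dk : ι → Type} [∀ j, SmallCategory (Dk j)]
    (θs : ∀ j, Dk j ⥤ C) : (∀ j, Dk j) ⥤ (ι → C) where
  obj x := fun j => (θs j).obj (x j)
  map f := fun j => (θs j).map (f j)
  map_id x := by funext j; exact (θs j).map_id _
  map_comp f g := by funext j; exact (θs j).map_comp _ _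

/-- The inclusion of the product of the domains of a family of partial
operations into `C^{Σ κ}`. -/
def sigmaIncl {κ : ι → Type} {Dk : ι → Type} [∀ j, SmallCategory (Dk j)]
    (is : ∀ j, Dk j ⥤ (κ j → C)) : (∀ j, Dk j) ⥤ ((Σ j, κ j) → C) where
  obj x := fun p => (is p.1).obj (x p.1) p.2
  map f := fun p => (is p.1).map (f p.1) p.2
  map_id x := by funext p; exact congrFun ((is p.1).map_id (x p.1)) p.2
  map_comp f g := by funext p; exact congrFun ((is p.1).map_comp (f p.1) (g p.1)) p.2

end DayPaper

open DayPaper CategoryTheory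

namespace Quot

variable {ι : Type*} {β : ι → Type*} (r : ∀ j, β j → β j → Prop)

theorem pi_mk_eq_of_forall [Finite ι] (hr : ∀ j x, r j x x) {q q' : ∀ j, β j}
    (h : ∀ j, Quot.mk (r j) (q j) = Quot.mk (r j) (q' j)) :
    Quot.mk (fun x y : ∀ j, β j => ∀ j, r j (x j) (y j)) q = Quot.mk _ q' := by
  classical
  have := Fintype.ofFinite ι
  suffices ∀ s : Finset ι, ∀ q, (∀ j, Quot.mk (r j) (q j) = Quot.mk (r j) (q' j)) →
      (∀ j ∉ s, q j = q' j) →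
      Quot.mk (fun x y : ∀ j, β j => ∀ j, r j (x j) (y j)) q = Quot.mk _ q' from
    this Finset.univ q h (by simp)
  intro s
  induction s using Finset.induction_on with
  | empty => exact fun q _ hq => congrArg _ (funext fun j => hq j (Finset.notMem_empty j))
  | insert j₀ s _ ih =>
    intro q hq hq'
    -- Changing the single coordinate `j₀` is well defined on the `j₀`-th quotient.
    let update : Quot (r j₀) → Quot (fun x y : ∀ j, β j => ∀ j, r j (x j) (y j)) :=
      Quot.lift (fun x => Quot.mk _ (Function.update q j₀ x)) fun x y hxy =>
        Quot.sound fun j => by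
          by_cases hj : j = j₀
          · subst hj; simpa using hxy
          · simpa [hj] using hr j (q j)
    calc Quot.mk _ q = update (Quot.mk _ (q j₀)) := by simp [update]
      _ = update (Quot.mk _ (q' j₀)) := by rw [hq]
      _ = Quot.mk _ q' := by
        refine ih _ (fun j => ?_) (fun j hj => ?_) <;> by_cases hj' : j = j₀
        · subst hj'; simp
        · simpa [hj'] using hq j
        · subst hj'; simp
        · simpa [hj'] using hq' j (by simp [hj, hj'])

noncomputable def piEquiv [Finite ι] (hr : ∀ j x, r j x x) :
    Quot (fun x y : ∀ j, β j => ∀ j, r j (x j) (y j)) ≃ ∀ j, Quot (r j) where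
  toFun := Quot.lift (fun q j => Quot.mk _ (q j)) fun _ _ h => funext fun j => Quot.sound (h j)
  invFun q := Quot.mk _ fun j => (q j).out
  left_inv := Quot.ind fun _ => pi_mk_eq_of_forall r hr fun _ => Quot.out_eq _
  right_inv q := funext fun j => Quot.out_eq (q j)

end Quot

namespace DayPaper

section Lan

variable {A B C D : Type} [SmallCategory A] [SmallCategory B] [SmallCategory C] [SmallCategory D]

theorem dayRel_refl (θ : B ⥤ C) (P : B ⥤ Type) (c : C) (x : DayPt θ P c) :
    DayRel θ P c x x :=
  ⟨𝟙 x.pt, by simp, by simp⟩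

def dayObjIdEquiv (P : B ⥤ Type) (b : B) : DayObj (𝟭 B) P b ≃ P.obj b where
  toFun := Quot.lift (fun x => P.map x.arr x.elt) fun x y ⟨f, h₁, h₂⟩ => by
    simp only [Functor.id_map] at h₂
    rw [h₂, ← h₁, Functor.map_comp_apply]
  invFun p := Quot.mk _ ⟨b, p, 𝟙 b⟩
  left_inv := Quot.ind fun x => (Quot.sound ⟨x.arr, rfl, by simp⟩).symm
  right_inv p := by simp

def dayExtGenIdIso (B : Type) [SmallCategory B] : DayExtGen (𝟭 B) ≅ 𝟭 (B ⥤ Type) :=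
  NatIso.ofComponents
    (fun P => NatIso.ofComponents (fun b => (dayObjIdEquiv P b).toIso) fun g => by
      ext q
      induction q using Quot.ind
      exact Functor.map_comp_apply P _ _ _)
    fun η => by
      ext b q
      induction q using Quot.ind
      exact (NatTrans.naturality_apply η _ _).symm

def dayObjCompEquiv (t : A ⥤ B) (θ : B ⥤ C) (P : A ⥤ Type) (c : C) :
    DayObj θ (DayCopresheaf t P) c ≃ DayObj (t ⋙ θ) P c where
  toFun := Quot.lift
    (fun z => Quot.lift
      (fun y : DayPt t P z.pt =>
        (Quot.mk _ ⟨y.pt, y.elt, θ.map y.arr ≫ z.arr⟩ : DayObj (t ⋙ θ) P c))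
      (fun y y' ⟨f, h₁, h₂⟩ => Quot.sound ⟨f, h₁, by simp [h₂]⟩) z.elt)
    (by
      rintro ⟨d, e, v⟩ ⟨d', e', v'⟩ ⟨f : d ⟶ d', h₁, h₂⟩
      induction e using Quot.ind
      dsimp only at h₁ h₂ ⊢
      rw [← h₁]
      exact congrArg (Quot.mk _) (by simp [h₂]))
  invFun := Quot.map
    (fun x =>
      (⟨t.obj x.pt, Quot.mk _ ⟨x.pt, x.elt, 𝟙 _⟩, x.arr⟩ : DayPt θ (DayCopresheaf t P) c))
    fun x x' ⟨f, h₁, h₂⟩ => ⟨t.map f, Quot.sound ⟨f, h₁, by simp⟩, h₂⟩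
  left_inv := Quot.ind fun ⟨d, e, v⟩ => by
    induction e using Quot.ind with
    | _ y =>
      refine Quot.sound ⟨y.arr, ?_, rfl⟩
      exact congrArg (Quot.mk _) (by simp)
  right_inv := Quot.ind fun x => congrArg (Quot.mk _) (by simp)

def dayExtGenCompIso (t : A ⥤ B) (θ : B ⥤ C) :
    DayExtGen (t ⋙ θ) ≅ DayExtGen t ⋙ DayExtGen θ :=
  NatIso.ofComponents
    (fun P => NatIso.ofComponents (fun c => (dayObjCompEquiv t θ P c).toIso.symm) fun g => by
      ext q
      induction q using Quot.ind
      rfl)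
    fun η => by
      ext c q
      induction q using Quot.ind
      rfl

def dayObjEquivOfFullyFaithful {i : B ⥤ D} (hi : i.FullyFaithful) (t : A ⥤ B) (P : A ⥤ Type)
    (b : B) : DayObj t P b ≃ DayObj (t ⋙ i) P (i.obj b) :=
  Quot.congr
    { toFun x := ⟨x.pt, x.elt, i.map x.arr⟩
      invFun y := ⟨y.pt, y.elt, hi.preimage y.arr⟩
      left_inv x := by simp
      right_inv y := by simp }
    fun x y => exists_congr fun f => and_congr_right' <| by
      change _ ↔ i.map x.arr = i.map (t.map f) ≫ i.map y.arr
      rw [← i.map_comp]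
      exact ⟨congrArg i.map, fun h => hi.map_injective h⟩

def dayExtGenIsoOfFullyFaithful {i : B ⥤ D} (hi : i.FullyFaithful) (t : A ⥤ B) :
    DayExtGen t ≅ DayExtGen (t ⋙ i) ⋙ (Functor.whiskeringLeft B D Type).obj i :=
  NatIso.ofComponents
    (fun P => NatIso.ofComponents (fun b => (dayObjEquivOfFullyFaithful hi t P b).toIso)
      fun g => by
        ext q
        induction q using Quot.ind
        exact congrArg (Quot.mk _) (by simp))
    fun η => by
      ext b q
      induction q using Quot.ind
      rfl

end Lan

section Partial

variable {A B C D K : Type} [SmallCategory A] [SmallCategory B] [SmallCategory C]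
  [SmallCategory D] [SmallCategory K] {ι : Type}

/-- `pday θ i` with its inner coend `∫^c Hom(c, i d) × ∏ⱼ Fⱼ(cⱼ)` evaluated by co-Yoneda,
i.e. `F ↦ Lan_θ (i^* (⊠ F))`. -/
def pdayReduced (θ : B ⥤ C) (i : B ⥤ (ι → K)) : (ι → (K ⥤ Type)) ⥤ (C ⥤ Type) :=
  extProdFunctor ι K ⋙ (Functor.whiskeringLeft B (ι → K) Type).obj i ⋙ DayExtGen θ

def pdayIsoReduced (θ : B ⥤ C) (i : B ⥤ (ι → C)) : pday θ i ≅ pdayReduced θ i :=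
  Functor.isoWhiskerLeft _ (Functor.isoWhiskerRight (dayExtGenIdIso (ι → C)) _)

def pdayReducedCompIso {i : B ⥤ D} (hi : i.FullyFaithful) (t : A ⥤ B) (θ : B ⥤ C)
    (σ : A ⥤ (ι → K)) :
    pdayReduced (t ⋙ θ) σ ≅
      pdayReduced (t ⋙ i) σ ⋙ (Functor.whiskeringLeft B D Type).obj i ⋙ DayExtGen θ :=
  Functor.isoWhiskerLeft (extProdFunctor ι K ⋙ (Functor.whiskeringLeft A (ι → K) Type).obj σ)
    (dayExtGenCompIso t θ ≪≫ Functor.isoWhiskerRight (dayExtGenIsoOfFullyFaithful hi t) _)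

variable {κ : ι → Type} {Dk : ι → Type} [∀ j, SmallCategory (Dk j)]
  (is : ∀ j, Dk j ⥤ (κ j → C)) (θs : ∀ j, Dk j ⥤ C) (F : (Σ j, κ j) → (C ⥤ Type))

def dayPtTuplePEquiv (c : ι → C) :
    DayPt (tupleP θs) (sigmaIncl is ⋙ extProd F) c ≃
      ∀ j, DayPt (θs j) (is j ⋙ extProd fun s => F ⟨j, s⟩) (c j) where
  toFun x j := ⟨x.pt j, fun s => x.elt ⟨j, s⟩, x.arr j⟩
  invFun q := ⟨fun j => (q j).pt, fun p => (q p.1).elt p.2, fun j => (q j).arr⟩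
  left_inv _ := rfl
  right_inv _ := rfl

theorem dayRel_tupleP_iff (c : ι → C) (x y : DayPt (tupleP θs) (sigmaIncl is ⋙ extProd F) c) :
    DayRel (tupleP θs) (sigmaIncl is ⋙ extProd F) c x y ↔
      ∀ j, DayRel (θs j) _ (c j) (dayPtTuplePEquiv is θs F c x j)
        (dayPtTuplePEquiv is θs F c y j) := by
  constructor
  · rintro ⟨f, h₁, h₂⟩ j
    exact ⟨f j, funext fun s => congrFun h₁ ⟨j, s⟩, congrFun h₂ j⟩
  · intro h
    choose f h₁ h₂ using h
    exact ⟨f, funext fun p => congrFun (h₁ p.1) p.2, funext h₂⟩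

noncomputable def dayObjTuplePEquiv [Finite ι] (c : ι → C) :
    DayObj (tupleP θs) (sigmaIncl is ⋙ extProd F) c ≃
      ∀ j, DayObj (θs j) (is j ⋙ extProd fun s => F ⟨j, s⟩) (c j) :=
  (Quot.congr _ (dayRel_tupleP_iff is θs F c)).trans
    (Quot.piEquiv _ fun _ => dayRel_refl _ _ _)

noncomputable def pdayReducedTuplePIso [Finite ι] :
    pdayReduced (tupleP θs) (sigmaIncl is) ≅
      Functor.pi' (fun j => reindexPi (Sigma.mk j) ⋙ pdayReduced (θs j) (is j)) ⋙
        extProdFunctor ι C :=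
  NatIso.ofComponents
    (fun F => NatIso.ofComponents (fun c => (dayObjTuplePEquiv is θs F c).toIso) fun g => by
      ext q
      induction q using Quot.ind
      rfl)
    fun η => by
      ext c q
      induction q using Quot.ind
      rfl

end Partial

end DayPaper

theorem dayExtension_partial_multicomposite_general (C : Type) [SmallCategory C]
    (n : ℕ) (κ : Fin n → ℕ)
    (Dm : Type) [SmallCategory Dm] (i : Dm ⥤ (Fin n → C)) [i.Full] [i.Faithful]
    (θ : Dm ⥤ C)
    (Dk : Fin n → Type) [∀ j, SmallCategory (Dk j)]
    (is : ∀ j, Dk j ⥤ (Fin (κ j) → C))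
    (θs : ∀ j, Dk j ⥤ C)
    (t : (∀ j, Dk j) ⥤ Dm) (hfac : t ⋙ i = tupleP θs) :
    Nonempty (pday (t ⋙ θ) (sigmaIncl is) ≅
      (Functor.pi' fun j => reindexPi (Sigma.mk j) ⋙ pday (θs j) (is j)) ⋙
        pday θ i) :=
  ⟨pdayIsoReduced _ _ ≪≫ pdayReducedCompIso (.ofFullyFaithful i) t θ (sigmaIncl is) ≪≫
    Functor.isoWhiskerRight (eqToIso (congrArg (pdayReduced · (sigmaIncl is)) hfac) ≪≫
      pdayReducedTuplePIso is θs) _ ≪≫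
    Functor.isoWhiskerRight (NatIso.pi' fun j =>
      (Functor.isoWhiskerLeft (reindexPi (Sigma.mk (β := fun j => Fin (κ j)) j))
        (pdayIsoReduced (θs j) (is j)).symm :)) (pdayReduced θ i) ≪≫
    Functor.isoWhiskerLeft _ (pdayIsoReduced θ i).symm⟩

/-- Day extension of a multi-composite of partial operations.  If the tuple
`(θ₁,…,θₙ)` of partial operations factors through the (full) domain `D` of the
partial operation `θ` via `t`, then the Day extension of the composite partial
operation (with underlying functor `t ⋙ θ` and domain `D₁ × ⋯ × Dₙ ⊆ C^{Σκ}`)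
is naturally isomorphic to the multi-composite of the Day extensions. -/
theorem dayExtension_partial_multicomposite (C : Type) [SmallCategory C]
    (n : ℕ) (κ : Fin n → ℕ)
    (Dm : Type) [SmallCategory Dm] (i : Dm ⥤ (Fin n → C)) [i.Full] [i.Faithful]
    (θ : Dm ⥤ C)
    (Dk : Fin n → Type) [∀ j, SmallCategory (Dk j)]
    (is : ∀ j, Dk j ⥤ (Fin (κ j) → C)) [∀ j, (is j).Full] [∀ j, (is j).Faithful]
    (θs : ∀ j, Dk j ⥤ C)
    (t : (∀ j, Dk j) ⥤ Dm) (hfac : t ⋙ i = tupleP θs) :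
    Nonempty (pday (t ⋙ θ) (sigmaIncl is) ≅
      (Functor.pi' fun j => reindexPi (Sigma.mk j) ⋙ pday (θs j) (is j)) ⋙
        pday θ i) :=
  dayExtension_partial_multicomposite_general C n κ Dm i θ Dk is θs t hfac
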